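/- Let μ be a finite Borel measure on ℝ^n, let Ω_1,…,Ω_p be Borel subsets of ℝ^n, and let h : ℝ^n → ℝ be a Borel measurable μ-integrable function. Suppose ∫_{⋂_{j∈S} Ω_j} h dμ = 0 for every nonempty subset S ⊆ {1,…,p}. Then for every i = 1,…,p, ∫_{Ω_i} h(x)/N(x) dμ(x) = 0, where N(x) := |{j ∈ {1,…,p} : x ∈ Ω_j}|. -/

import Mathlib

/-!
Split the space into the cells `atom Ω T = {x | {j | x ∈ Ω j} = T}` of the Venn diagram of the
`Ω j`. Each intersection `⋂ j ∈ T, Ω j` is the disjoint union of the cells `atom Ω S` with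
`T ⊆ S`, so the hypothesis says `∑ S ⊇ T, ∫_{atom Ω S} h = 0` for every nonempty `T`, and downward
induction on `T` gives `∫_{atom Ω T} h = 0`. On `atom Ω S` the count `N` is the constant `#S`, and
`Ω i` is the union of the cells `atom Ω S` with `i ∈ S`, so
`∫_{Ω i} h / N = ∑ S ∋ i, (∫_{atom Ω S} h) / #S = 0`.
-/

open MeasureTheory Finset

noncomputable def Ncount {n p : ℕ} (Ω : Fin p → Set (Fin n → ℝ)) (x : Fin n → ℝ) : ℕ :=
  Nat.card {j : Fin p // x ∈ Ω j}

theorem Finset.eq_zero_of_sum_superset_eq_zero {ι M : Type*} [Fintype ι] [DecidableEq ι]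
    [AddCommMonoid M] {f : Finset ι → M} (hf : ∀ T : Finset ι, T.Nonempty → ∑ S with T ⊆ S, f S = 0)
    {T : Finset ι} (hT : T.Nonempty) : f T = 0 := by
  induction T using WellFoundedGT.induction with
  | _ T ih =>
  have hsplit := hf T hT
  rw [← add_sum_erase _ _ (mem_filter.2 ⟨mem_univ T, subset_rfl⟩)] at hsplit
  rwa [sum_eq_zero fun S hS => ?_, add_zero] at hsplit
  obtain ⟨hne, -, hTS⟩ := by simpa only [mem_erase, mem_filter] using hS
  exact ih S (ssubset_of_subset_of_ne hTS (Ne.symm hne)) (hT.mono hTS)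

section Atoms

variable {α ι : Type*} [Fintype ι] (Ω : ι → Set α)

noncomputable def indexSet (x : α) : Finset ι := (Set.toFinite {j | x ∈ Ω j}).toFinset

@[simp]
theorem mem_indexSet {x : α} {j : ι} : j ∈ indexSet Ω x ↔ x ∈ Ω j :=
  Set.Finite.mem_toFinset _

def atom (T : Finset ι) : Set α := indexSet Ω ⁻¹' {T}

theorem pairwise_disjoint_atom : Pairwise (Function.onFun Disjoint (atom Ω)) :=
  fun _ _ hST => Disjoint.preimage _ (Set.disjoint_singleton.2 hST)

theorem measurableSet_atom [MeasurableSpace α] (hΩ : ∀ j, MeasurableSet (Ω j))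
    (T : Finset ι) : MeasurableSet (atom Ω T) := by
  have : atom Ω T = ⋂ j, {x | x ∈ Ω j ↔ j ∈ T} := by
    ext x
    simp [atom, Finset.ext_iff]
  rw [this]
  refine MeasurableSet.iInter fun j => ?_
  by_cases hj : j ∈ T
  · simp only [hj, iff_true]
    exact hΩ j
  · simp only [hj, iff_false]
    exact (hΩ j).compl

theorem biInter_eq_biUnion_atom [DecidableEq ι] (T : Finset ι) :
    ⋂ j ∈ T, Ω j = ⋃ S ∈ ({S | T ⊆ S} : Finset (Finset ι)), atom Ω S := by
  ext x
  simp [atom, subset_iff]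

end Atoms

section Integrals

variable {α ι : Type*} [MeasurableSpace α] [Fintype ι] {Ω : ι → Set α}
  {μ : Measure α}

theorem setIntegral_biInter_eq_sum_atom [DecidableEq ι] {E : Type*} [NormedAddCommGroup E]
    [NormedSpace ℝ E]
    (hΩ : ∀ j, MeasurableSet (Ω j)) {g : α → E} (hg : ∀ S, IntegrableOn g (atom Ω S) μ)
    (T : Finset ι) :
    ∫ x in ⋂ j ∈ T, Ω j, g x ∂μ = ∑ S with T ⊆ S, ∫ x in atom Ω S, g x ∂μ := by
  rw [biInter_eq_biUnion_atom, integral_biUnion_finset _ (fun S _ => measurableSet_atom Ω hΩ S)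
    ((pairwise_disjoint_atom Ω).set_pairwise _) (fun S _ => hg S)]

theorem setIntegral_atom_eq_zero {E : Type*} [NormedAddCommGroup E] [NormedSpace ℝ E]
    (hΩ : ∀ j, MeasurableSet (Ω j)) {g : α → E} (hg : Integrable g μ)
    (hS : ∀ T : Finset ι, T.Nonempty → ∫ x in ⋂ j ∈ T, Ω j, g x ∂μ = 0)
    {T : Finset ι} (hT : T.Nonempty) : ∫ x in atom Ω T, g x ∂μ = 0 := by
  classical
  exact eq_zero_of_sum_superset_eq_zero (fun T hT =>
    (setIntegral_biInter_eq_sum_atom hΩ (fun _ => hg.integrableOn) T).symm.trans (hS T hT)) hT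

theorem integrableOn_atom_div_card (hΩ : ∀ j, MeasurableSet (Ω j)) {g : α → ℝ}
    (hg : Integrable g μ) (T : Finset ι) :
    IntegrableOn (fun x => g x / #(indexSet Ω x)) (atom Ω T) μ :=
  IntegrableOn.congr_fun (hg.integrableOn.div_const #T) (fun x hx => by rw [hx])
    (measurableSet_atom Ω hΩ T)

theorem setIntegral_atom_div_card (hΩ : ∀ j, MeasurableSet (Ω j)) (g : α → ℝ) (T : Finset ι) :
    ∫ x in atom Ω T, g x / #(indexSet Ω x) ∂μ = (∫ x in atom Ω T, g x ∂μ) / #T := by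
  rw [← integral_div]
  exact setIntegral_congr_fun (measurableSet_atom Ω hΩ T) fun x hx => by rw [hx]

end Integrals

theorem Ncount_eq_card_indexSet {n p : ℕ} (Ω : Fin p → Set (Fin n → ℝ)) (x : Fin n → ℝ) :
    Ncount Ω x = #(indexSet Ω x) :=
  (Nat.card_coe_set_eq _).trans (Set.ncard_eq_toFinset_card _ _)

theorem stmt10_general {n p : ℕ} (μ : Measure (Fin n → ℝ))
    (Ω : Fin p → Set (Fin n → ℝ)) (hΩ : ∀ i, MeasurableSet (Ω i))
    (h : (Fin n → ℝ) → ℝ) (hi : Integrable h μ)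
    (hS : ∀ S : Finset (Fin p), S.Nonempty → ∫ x in ⋂ j ∈ S, Ω j, h x ∂μ = 0)
    (i : Fin p) :
    ∫ x in Ω i, h x / (Ncount Ω x : ℝ) ∂μ = 0 := by
  simp_rw [Ncount_eq_card_indexSet, ← set_biInter_singleton i Ω]
  rw [setIntegral_biInter_eq_sum_atom hΩ (integrableOn_atom_div_card hΩ hi)]
  refine sum_eq_zero fun S hiS => ?_
  rw [setIntegral_atom_div_card hΩ, setIntegral_atom_eq_zero hΩ hi hS, zero_div]
  exact (singleton_nonempty i).mono (mem_filter.1 hiS).2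

/-- If `∫_{⋂_{j∈S} Ω_j} h dμ = 0` for every nonempty `S ⊆ {1,…,p}`, then
`∫_{Ω_i} h(x)/N(x) dμ(x) = 0` for every `i`, where `N(x) = |{j : x ∈ Ω_j}|`. -/
theorem stmt10 {n p : ℕ} (μ : Measure (Fin n → ℝ)) [IsFiniteMeasure μ]
    (Ω : Fin p → Set (Fin n → ℝ)) (hΩ : ∀ i, MeasurableSet (Ω i))
    (h : (Fin n → ℝ) → ℝ) (hm : Measurable h) (hi : Integrable h μ)
    (hS : ∀ S : Finset (Fin p), S.Nonempty → ∫ x in ⋂ j ∈ S, Ω j, h x ∂μ = 0)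
    (i : Fin p) :
    ∫ x in Ω i, h x / (Ncount Ω x : ℝ) ∂μ = 0 :=
  stmt10_general μ Ω hΩ h hi hS i
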